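/- arXiv:2102.02253 — 3 statements merged into one kernel-verified Lean document; each statement's English description precedes it below -/
import Mathlib

section
/- If Ω is a non-degenerate grade-homogeneous 2-form on an ℕ-graded manifold N of degree deg N (the highest coordinate grade), then deg N ≤ |Ω| ≤ 2·deg N. -/
/-- On an ℕ-graded manifold with coordinates of grades `w A ≤ degN` (the degree of
the manifold, attained by some coordinate), let `Ω` be a grade-homogeneous 2-form of
grade `gΩ`, written via its coefficient matrix `Ω A B` (of grade `gΩ - w A - w B`):
entries whose grade would be negative vanish, and entries of strictly positive grade
lie in the (proper) ideal `I` of positively-graded functions. If `Ω` is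
non-degenerate (its coefficient matrix is invertible, i.e. its determinant is a
unit), then `degN ≤ gΩ ≤ 2·degN`. -/
theorem nondegenerate_form_grade_bounds
    {R : Type*} [CommRing R] [Nontrivial R] {k : ℕ} (hk : 0 < k)
    (I : Ideal R) (hI : I ≠ ⊤)
    (w : Fin k → ℕ) (gΩ : ℕ) (Ω : Matrix (Fin k) (Fin k) R)
    (hneg : ∀ A B, gΩ < w A + w B → Ω A B = 0)
    (hpos : ∀ A B, w A + w B < gΩ → Ω A B ∈ I)
    (hnd : IsUnit Ω.det)
    (degN : ℕ) (hub : ∀ A, w A ≤ degN) (hattain : ∃ A, w A = degN) :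
    degN ≤ gΩ ∧ gΩ ≤ 2 * degN := by
  constructor
  · -- lower bound: otherwise the row of a top-degree coordinate vanishes
    by_contra h
    push_neg at h
    obtain ⟨A, hA⟩ := hattain
    have hrow : ∀ B, Ω A B = 0 := fun B =>
      hneg A B (lt_of_lt_of_le (hA ▸ h) (Nat.le_add_right _ _))
    have hdet : Ω.det = 0 := by
      apply Matrix.det_eq_zero_of_row_eq_zero A
      exact hrow
    rw [hdet] at hnd
    exact not_isUnit_zero hnd
  · -- upper bound: otherwise every entry lies in I, hence det ∈ I
    by_contra h
    push_neg at h
    have hall : ∀ A B, Ω A B ∈ I := fun A B =>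
      hpos A B (lt_of_le_of_lt (by have := hub A; have := hub B; omega) h)
    have hdet : Ω.det ∈ I := by
      rw [Matrix.det_apply]
      refine Ideal.sum_mem _ fun σ _ => zsmul_mem ?_ _
      have i : Fin k := ⟨0, hk⟩
      rw [← Finset.prod_erase_mul _ _ (Finset.mem_univ i)]
      exact Ideal.mul_mem_left _ _ (hall _ _)
    exact hI (I.eq_top_of_isUnit_mem hdet hnd)
end

section
/- In the Berezin algebra B₂ = Λ[θ,θ̄]⊗ℂ[y,ȳ] with odd Laplacian Δ = ∂_θ∂_y + ∂_θ̄∂_ȳ, the cohomology of Δ is one-dimensional, spanned by the class of C = θθ̄: every Δ-closed element f with no component proportional to θθ̄·(constant) is Δ-exact, and C itself is Δ-closed but not Δ-exact. -/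
/-- The Berezin algebra `B₂ = Λ[θ,θ̄] ⊗ ℂ[y,ȳ]`, modeled by coefficient
functions `f a b n m` of the monomials `θ^a θ̄^b y^n ȳ^m` (`a b : Bool`). -/
abbrev BerezinB2 : Type := Bool → Bool → ℕ → ℕ → ℂ

/-- `∂/∂y`. -/
def pdy (f : BerezinB2) : BerezinB2 := fun a b n m => ((n : ℂ) + 1) * f a b (n + 1) m

/-- `∂/∂ȳ`. -/
def pdyb (f : BerezinB2) : BerezinB2 := fun a b n m => ((m : ℂ) + 1) * f a b n (m + 1)

/-- Left derivation `∂/∂θ`. -/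
def pdθ (f : BerezinB2) : BerezinB2 := fun a b n m => if a then 0 else f true b n m

/-- Left derivation `∂/∂θ̄` (Koszul sign from passing `θ`). -/
def pdθb (f : BerezinB2) : BerezinB2 :=
  fun a b n m => if b then 0 else (if a then -1 else 1) * f a true n m

/-- The odd Laplacian `Δ = ∂²/∂θ∂y + ∂²/∂θ̄∂ȳ`. -/
def oddLap (f : BerezinB2) : BerezinB2 := pdθ (pdy f) + pdθb (pdyb f)

/-- The element `C = θθ̄`. -/
def thetaThetaBar : BerezinB2 :=
  fun a b n m => if a = true ∧ b = true ∧ n = 0 ∧ m = 0 then 1 else 0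

/-- A homotopy inverse: preimage of a closed `f` under `Δ`. -/
noncomputable def gaux (f : BerezinB2) : BerezinB2 := fun a b n m =>
  match a, b with
  | true, true =>
    (match m with
     | m+1 => -f true false n m / ((m : ℂ) + 1)
     | 0 => (match n with
             | n+1 => f false true n 0 / ((n : ℂ) + 1)
             | 0 => 0))
  | true, false =>
    (match n with
     | n+1 => f false false n m / ((n : ℂ) + 1)
     | 0 => 0)
  | false, _ => 0

/-- The Δ-cohomology of the Berezin algebra `B₂` is one-dimensional, spanned by
`C = θθ̄`: `C` is Δ-closed but not Δ-exact, and every Δ-closed element whose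
component along `θθ̄` (times a constant) vanishes is Δ-exact. -/
theorem oddLaplacian_cohomology_spanned_by_thetaThetaBar :
    oddLap thetaThetaBar = 0
      ∧ (¬ ∃ g : BerezinB2, oddLap g = thetaThetaBar)
      ∧ (∀ f : BerezinB2, oddLap f = 0 → f true true 0 0 = 0 →
          ∃ g : BerezinB2, oddLap g = f) := by
  refine ⟨?_, ?_, ?_⟩
  · funext a b n m
    simp only [oddLap, pdθ, pdθb, pdy, pdyb, thetaThetaBar, Pi.add_apply, Pi.zero_apply]
    cases a <;> cases b <;> simp
  · rintro ⟨g, hg⟩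
    have := congrFun (congrFun (congrFun (congrFun hg true) true) 0) 0
    simp [oddLap, pdθ, pdθb, pdy, pdyb, thetaThetaBar] at this
  · intro f hf h00
    have hf' : ∀ a b n m, oddLap f a b n m = 0 := fun a b n m => by rw [hf]; rfl
    have hTF : ∀ n m : ℕ, ((m : ℂ) + 1) * f true true n (m + 1) = 0 := by
      intro n m
      have := hf' true false n m
      simpa [oddLap, pdθ, pdθb, pdy, pdyb] using this
    have hFT : ∀ n m : ℕ, ((n : ℂ) + 1) * f true true (n + 1) m = 0 := by
      intro n m
      have := hf' false true n m
      simpa [oddLap, pdθ, pdθb, pdy, pdyb] using this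
    have hFF : ∀ n m : ℕ,
        ((n : ℂ) + 1) * f true false (n + 1) m + ((m : ℂ) + 1) * f false true n (m + 1) = 0 := by
      intro n m
      have := hf' false false n m
      simpa [oddLap, pdθ, pdθb, pdy, pdyb] using this
    have htt : ∀ n m, f true true n m = 0 := by
      intro n m
      match n, m with
      | 0, 0 => exact h00
      | n, m+1 =>
        have := hTF n m
        exact (mul_eq_zero.mp this).resolve_left (Nat.cast_add_one_ne_zero m)
      | n+1, 0 =>
        have := hFT n 0
        exact (mul_eq_zero.mp this).resolve_left (Nat.cast_add_one_ne_zero n)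
    refine ⟨gaux f, ?_⟩
    funext a b n m
    have hn : ((n : ℂ) + 1) ≠ 0 := Nat.cast_add_one_ne_zero n
    have hm : ((m : ℂ) + 1) ≠ 0 := Nat.cast_add_one_ne_zero m
    cases a <;> cases b
    · -- false false
      show ((n : ℂ) + 1) * gaux f true false (n+1) m
            + 1 * (((m : ℂ) + 1) * gaux f false true n (m+1)) = f false false n m
      show ((n : ℂ) + 1) * (f false false n m / ((n : ℂ) + 1)) + 1 * (((m : ℂ) + 1) * 0)
            = f false false n m
      field_simp
      ring
    · -- false true
      show ((n : ℂ) + 1) * gaux f true true (n+1) m + 0 = f false true n m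
      match m with
      | 0 =>
        show ((n : ℂ) + 1) * (f false true n 0 / ((n : ℂ) + 1)) + 0 = f false true n 0
        field_simp
        ring
      | m+1 =>
        show ((n : ℂ) + 1) * (-f true false (n+1) m / ((m : ℂ) + 1)) + 0 = f false true n (m+1)
        have := hFF n m
        have hm' : ((m : ℂ) + 1) ≠ 0 := Nat.cast_add_one_ne_zero m
        field_simp
        linear_combination (-1 : ℂ) * this
    · -- true false
      show (0 : ℂ) + -1 * (((m : ℂ) + 1) * gaux f true true n (m+1)) = f true false n m
      show (0 : ℂ) + -1 * (((m : ℂ) + 1) * (-f true false n m / ((m : ℂ) + 1))) = f true false n m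
      field_simp
      ring
    · -- true true
      show (0 : ℂ) + 0 = f true true n m
      rw [htt]; ring
end

section
/- In the Berezin algebra B₂ with odd Laplacian Δ = ∂_θ∂_θ̄-type operator as above, the elements A_{nm} = n θ̄ y^{n-1} ȳ^m - m θ y^n ȳ^{m-1}, B_{nm} = y^n ȳ^m, and C = θθ̄ are all Δ-closed, and they satisfy the Schouten bracket relations (A_{nm}, B_{kl}) = (ln - mk) B_{n+k-1, m+l-1} and (A_{nm}, A_{kl}) = (ln - mk) A_{n+k-1, m+l-1}, where (φ,ψ) = Δ(φψ) - (Δφ)ψ - (-1)^{|φ|} φ Δψ. -/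
/-- The (supercommutative) product of the Berezin algebra, with the Koszul sign
`θ̄θ = -θθ̄`. -/
noncomputable def bmul (f g : BerezinB2) : BerezinB2 := fun a b n m =>
  ∑ p ∈ Finset.range (n + 1), ∑ q ∈ Finset.range (m + 1),
    match a, b with
    | false, false => f false false p q * g false false (n - p) (m - q)
    | true, false =>
        f true false p q * g false false (n - p) (m - q)
          + f false false p q * g true false (n - p) (m - q)
    | false, true =>
        f false true p q * g false false (n - p) (m - q)
          + f false false p q * g false true (n - p) (m - q)
    | true, true =>
        f true true p q * g false false (n - p) (m - q)
          + f false false p q * g true true (n - p) (m - q)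
          + f true false p q * g false true (n - p) (m - q)
          - f false true p q * g true false (n - p) (m - q)

/-- The BV/Schouten bracket `(φ,ψ) = Δ(φψ) - (Δφ)ψ - (-1)^{|φ|} φ Δψ`, for `φ` of
Grassmann parity `ε`. -/
noncomputable def schouten (ε : ℕ) (f g : BerezinB2) : BerezinB2 :=
  oddLap (bmul f g) - bmul (oddLap f) g - ((-1 : ℂ) ^ ε) • bmul f (oddLap g)

/-- `A_{nm} = n θ̄ y^{n-1} ȳ^m - m θ y^n ȳ^{m-1}`. -/
def Aelt (n m : ℕ) : BerezinB2 := fun a b p q =>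
  (if a = false ∧ b = true ∧ p + 1 = n ∧ q = m then (n : ℂ) else 0)
    + (if a = true ∧ b = false ∧ p = n ∧ q + 1 = m then -(m : ℂ) else 0)

/-- `B_{nm} = y^n ȳ^m`. -/
def Belt (n m : ℕ) : BerezinB2 := fun a b p q =>
  if a = false ∧ b = false ∧ p = n ∧ q = m then 1 else 0

/-- `C = θθ̄`. -/
def Celt : BerezinB2 := fun a b p q =>
  if a = true ∧ b = true ∧ p = 0 ∧ q = 0 then 1 else 0

def mono (a₀ b₀ : Bool) (n₀ m₀ : ℕ) : BerezinB2 := fun a b p q =>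
  if a = a₀ ∧ b = b₀ ∧ p = n₀ ∧ q = m₀ then 1 else 0

lemma sumCollapse2 (N M n₀ m₀ : ℕ) (F : ℕ → ℕ → ℂ) :
    (∑ p ∈ Finset.range (N+1), ∑ q ∈ Finset.range (M+1),
      (if p = n₀ ∧ q = m₀ then F p q else 0))
      = if n₀ ≤ N ∧ m₀ ≤ M then F n₀ m₀ else 0 := by
  have h1 : ∀ p, (∑ q ∈ Finset.range (M+1), if p = n₀ ∧ q = m₀ then F p q else 0)
      = if p = n₀ then (if m₀ ≤ M then F p m₀ else 0) else 0 := by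
    intro p
    by_cases hp : p = n₀
    · simp only [hp, true_and]
      rw [Finset.sum_ite_eq' (Finset.range (M+1)) m₀ (fun q => F n₀ q)]
      simp [Nat.lt_succ_iff]
    · simp [hp]
  simp only [h1]
  rw [Finset.sum_ite_eq' (Finset.range (N+1)) n₀]
  simp [Nat.lt_succ_iff, ite_and]

lemma sumCollapse3 (N M n₀ m₀ k l : ℕ) (c : ℂ) :
    (∑ p ∈ Finset.range (N+1), ∑ q ∈ Finset.range (M+1),
      if N - p = k ∧ M - q = l then (if p = n₀ ∧ q = m₀ then c else 0) else 0)
      = if N = n₀ + k ∧ M = m₀ + l then c else 0 := by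
  have h : ∀ p q : ℕ, (if N - p = k ∧ M - q = l then (if p = n₀ ∧ q = m₀ then c else 0) else 0)
      = (if p = n₀ ∧ q = m₀ then (if N - p = k ∧ M - q = l then c else 0) else 0) := by
    intro p q; split_ifs <;> rfl
  simp only [h]
  rw [sumCollapse2 N M n₀ m₀ (fun p q => if N - p = k ∧ M - q = l then c else 0)]
  split_ifs <;> first | rfl | (exfalso; omega)

lemma bmul_ft_ff (n m k l : ℕ) :
    bmul (mono false true n m) (mono false false k l) = mono false true (n+k) (m+l) := by
  funext a b N M
  cases a <;> cases b <;>
    simp only [bmul, mono, Bool.false_eq_true, Bool.true_eq_false, false_and, and_false,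
      true_and, and_true, reduceIte, mul_zero, zero_mul, mul_one, one_mul, add_zero,
      zero_add, mul_ite, ite_mul, ite_self, Finset.sum_const_zero, sub_zero, zero_sub,
      neg_zero, if_true, if_false] <;>
    first | rfl | rw [sumCollapse3]

lemma bmul_tf_ff (n m k l : ℕ) :
    bmul (mono true false n m) (mono false false k l) = mono true false (n+k) (m+l) := by
  funext a b N M
  cases a <;> cases b <;>
    simp only [bmul, mono, Bool.false_eq_true, Bool.true_eq_false, false_and, and_false,
      true_and, and_true, reduceIte, mul_zero, zero_mul, mul_one, one_mul, add_zero,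
      zero_add, mul_ite, ite_mul, ite_self, Finset.sum_const_zero, sub_zero, zero_sub,
      neg_zero, if_true, if_false] <;>
    first | rfl | rw [sumCollapse3]

lemma bmul_ft_tf (n m k l : ℕ) :
    bmul (mono false true n m) (mono true false k l) = (-1 : ℂ) • mono true true (n+k) (m+l) := by
  funext a b N M
  cases a <;> cases b <;>
    simp only [bmul, mono, Bool.false_eq_true, Bool.true_eq_false, false_and, and_false,
      true_and, and_true, reduceIte, mul_zero, zero_mul, mul_one, one_mul, add_zero,
      zero_add, mul_ite, ite_mul, ite_self, Finset.sum_const_zero, sub_zero, zero_sub,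
      neg_zero, if_true, if_false, Pi.smul_apply, smul_eq_mul, Finset.sum_neg_distrib,
      mul_neg, neg_neg, smul_zero] <;>
    first | rfl | simp | (rw [sumCollapse3]; split_ifs <;> ring)

lemma bmul_tf_ft (n m k l : ℕ) :
    bmul (mono true false n m) (mono false true k l) = mono true true (n+k) (m+l) := by
  funext a b N M
  cases a <;> cases b <;>
    simp only [bmul, mono, Bool.false_eq_true, Bool.true_eq_false, false_and, and_false,
      true_and, and_true, reduceIte, mul_zero, zero_mul, mul_one, one_mul, add_zero,
      zero_add, mul_ite, ite_mul, ite_self, Finset.sum_const_zero, sub_zero, zero_sub,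
      neg_zero, if_true, if_false] <;>
    first | rfl | rw [sumCollapse3]

lemma bmul_ft_ft (n m k l : ℕ) :
    bmul (mono false true n m) (mono false true k l) = 0 := by
  funext a b N M
  cases a <;> cases b <;>
    simp [bmul, mono, ite_and]

lemma bmul_tf_tf (n m k l : ℕ) :
    bmul (mono true false n m) (mono true false k l) = 0 := by
  funext a b N M
  cases a <;> cases b <;>
    simp [bmul, mono, ite_and]

lemma oddLap_mono_ff (n m : ℕ) : oddLap (mono false false n m) = 0 := by
  funext a b p q
  cases a <;> cases b <;> simp [oddLap, pdθ, pdθb, pdy, pdyb, mono]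

lemma oddLap_mono_ft (n m : ℕ) :
    oddLap (mono false true n m) = (m : ℂ) • mono false false n (m-1) := by
  funext a b p q
  cases a <;> cases b <;>
    simp only [oddLap, pdθ, pdθb, pdy, pdyb, mono, Pi.add_apply, Pi.smul_apply,
      smul_eq_mul, Bool.false_eq_true, Bool.true_eq_false, false_and, and_false,
      true_and, and_true, reduceIte, mul_zero, zero_mul, mul_one, one_mul, add_zero,
      zero_add, mul_ite, ite_mul, ite_self, if_true, if_false, neg_zero, one_mul] <;>
    split_ifs <;>
    first
      | rfl
      | ring1
      | (exfalso; omega)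
      | ((obtain rfl : q + 1 = m := by omega); push_cast; ring1)
      | ((obtain rfl : m = 0 := by omega); push_cast; ring1)

lemma oddLap_mono_tf (n m : ℕ) :
    oddLap (mono true false n m) = (n : ℂ) • mono false false (n-1) m := by
  funext a b p q
  cases a <;> cases b <;>
    simp only [oddLap, pdθ, pdθb, pdy, pdyb, mono, Pi.add_apply, Pi.smul_apply,
      smul_eq_mul, Bool.false_eq_true, Bool.true_eq_false, false_and, and_false,
      true_and, and_true, reduceIte, mul_zero, zero_mul, mul_one, one_mul, add_zero,
      zero_add, mul_ite, ite_mul, ite_self, if_true, if_false, neg_zero, one_mul] <;>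
    split_ifs <;>
    first
      | rfl
      | ring1
      | (exfalso; omega)
      | ((obtain rfl : p + 1 = n := by omega); push_cast; ring1)
      | ((obtain rfl : n = 0 := by omega); push_cast; ring1)

lemma oddLap_mono_tt (n m : ℕ) : oddLap (mono true true n m) = Aelt n m := by
  funext a b p q
  cases a <;> cases b <;>
    simp only [oddLap, pdθ, pdθb, pdy, pdyb, mono, Aelt, Pi.add_apply,
      Bool.false_eq_true, Bool.true_eq_false, false_and, and_false,
      true_and, and_true, reduceIte, mul_zero, zero_mul, mul_one, one_mul, add_zero,
      zero_add, mul_ite, ite_mul, ite_self, if_true, if_false, neg_zero, one_mul,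
      neg_mul, mul_neg] <;>
    split_ifs <;>
    first
      | rfl
      | ring1
      | (exfalso; omega)
      | ((obtain rfl : p + 1 = n := by omega); push_cast; ring1)
      | ((obtain rfl : q + 1 = m := by omega); push_cast; ring1)
      | ((obtain rfl : n = 0 := by omega); push_cast; ring1)
      | ((obtain rfl : m = 0 := by omega); push_cast; ring1)

lemma oddLap_add (f g : BerezinB2) : oddLap (f + g) = oddLap f + oddLap g := by
  funext a b n m
  cases a <;> cases b <;>
    simp [oddLap, pdθ, pdθb, pdy, pdyb, Pi.add_apply, mul_add] <;> ring

lemma oddLap_smul (c : ℂ) (f : BerezinB2) : oddLap (c • f) = c • oddLap f := by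
  funext a b n m
  cases a <;> cases b <;>
    simp [oddLap, pdθ, pdθb, pdy, pdyb, Pi.add_apply, Pi.smul_apply, smul_eq_mul,
      mul_add] <;> ring

lemma bmul_zero_left (g : BerezinB2) : bmul 0 g = 0 := by
  funext a b n m
  cases a <;> cases b <;> simp [bmul]

lemma bmul_zero_right (f : BerezinB2) : bmul f 0 = 0 := by
  funext a b n m
  cases a <;> cases b <;> simp [bmul]

lemma bmul_add_left (f g h : BerezinB2) : bmul (f + g) h = bmul f h + bmul g h := by
  funext a b n m
  cases a <;> cases b <;>
    (simp only [bmul, Pi.add_apply]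
     rw [← Finset.sum_add_distrib]
     refine Finset.sum_congr rfl fun p _ => ?_
     rw [← Finset.sum_add_distrib]
     refine Finset.sum_congr rfl fun q _ => ?_
     ring)

lemma bmul_add_right (f g h : BerezinB2) : bmul f (g + h) = bmul f g + bmul f h := by
  funext a b n m
  cases a <;> cases b <;>
    (simp only [bmul, Pi.add_apply]
     rw [← Finset.sum_add_distrib]
     refine Finset.sum_congr rfl fun p _ => ?_
     rw [← Finset.sum_add_distrib]
     refine Finset.sum_congr rfl fun q _ => ?_
     ring)

lemma bmul_smul_left (c : ℂ) (f g : BerezinB2) : bmul (c • f) g = c • bmul f g := by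
  funext a b n m
  cases a <;> cases b <;>
    (simp only [bmul, Pi.smul_apply, smul_eq_mul, Finset.mul_sum]
     refine Finset.sum_congr rfl fun p _ => ?_
     refine Finset.sum_congr rfl fun q _ => ?_
     ring)

lemma bmul_smul_right (c : ℂ) (f g : BerezinB2) : bmul f (c • g) = c • bmul f g := by
  funext a b n m
  cases a <;> cases b <;>
    (simp only [bmul, Pi.smul_apply, smul_eq_mul, Finset.mul_sum]
     refine Finset.sum_congr rfl fun p _ => ?_
     refine Finset.sum_congr rfl fun q _ => ?_
     ring)

lemma Adec (n m : ℕ) :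
    Aelt n m = (n : ℂ) • mono false true (n-1) m + (-(m : ℂ)) • mono true false n (m-1) := by
  funext a b p q
  cases a <;> cases b <;>
    simp only [Aelt, mono, Pi.add_apply, Pi.smul_apply, smul_eq_mul, mul_ite, mul_one,
      mul_zero, neg_mul, one_mul, Bool.false_eq_true, Bool.true_eq_false, false_and,
      and_false, true_and, and_true, reduceIte, add_zero, zero_add, neg_zero,
      if_true, if_false] <;>
    split_ifs <;>
    first
      | ring1
      | (exfalso; omega)
      | ((obtain rfl : n = 0 := by omega); push_cast; ring1)
      | ((obtain rfl : m = 0 := by omega); push_cast; ring1)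

lemma iteval1 (P : Prop) [Decidable P] (p X : ℕ) (h : P → p + 1 = X) :
    (if P then (X:ℂ) else 0) = (if P then ((p:ℂ)+1) else 0) := by
  split_ifs with hP
  · rw [← h hP]; push_cast; ring
  · rfl

lemma iteval2 (P : Prop) [Decidable P] (q Y : ℕ) (h : P → q + 1 = Y) :
    (if P then (-(Y:ℂ)) else 0) = (if P then (-((q:ℂ)+1)) else 0) := by
  split_ifs with hP
  · rw [← h hP]; push_cast; ring
  · rfl

lemma oddLapA (n m : ℕ) : oddLap (Aelt n m) = 0 := by
  rw [Adec, oddLap_add, oddLap_smul, oddLap_smul, oddLap_mono_ft, oddLap_mono_tf]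
  rw [smul_smul, smul_smul, ← add_smul]
  have h : (n:ℂ) * m + (-(m:ℂ)) * n = 0 := by ring
  rw [h, zero_smul]

lemma final_AB (n m k l : ℕ) :
    (n:ℂ) • (((m+l : ℕ):ℂ) • mono false false (n-1+k) (m+l-1))
      + (-(m:ℂ)) • (((n+k : ℕ):ℂ) • mono false false (n+k-1) ((m-1)+l))
    = (((l : ℤ) * (n : ℤ) - (m : ℤ) * (k : ℤ) : ℤ) : ℂ) • mono false false (n+k-1) (m+l-1) := by
  funext a b p q
  cases a <;> cases b <;>
    simp only [mono, Pi.add_apply, Pi.smul_apply, smul_eq_mul, Bool.false_eq_true,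
      Bool.true_eq_false, false_and, and_false, true_and, and_true, reduceIte, mul_zero,
      add_zero, zero_add, if_true, if_false, mul_ite, mul_one] <;>
    split_ifs <;>
    first
      | (push_cast; ring1)
      | (exfalso; omega)
      | ((obtain rfl : n = 0 := by omega); push_cast; ring1)
      | ((obtain rfl : m = 0 := by omega); push_cast; ring1)
      | ((obtain rfl : n = 0 := by omega); (obtain rfl : m = 0 := by omega); push_cast; ring1)

lemma schoutenAB (n m k l : ℕ) :
    schouten 1 (Aelt n m) (Belt k l)
      = (((l : ℤ) * (n : ℤ) - (m : ℤ) * (k : ℤ) : ℤ) : ℂ) • Belt (n + k - 1) (m + l - 1) := by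
  unfold schouten
  rw [oddLapA, show oddLap (Belt k l) = 0 from oddLap_mono_ff k l,
    bmul_zero_left, bmul_zero_right, smul_zero, sub_zero, sub_zero]
  rw [show Belt k l = mono false false k l from rfl, Adec, bmul_add_left,
    bmul_smul_left, bmul_smul_left, bmul_ft_ff, bmul_tf_ff, oddLap_add,
    oddLap_smul, oddLap_smul, oddLap_mono_ft, oddLap_mono_tf]
  exact final_AB n m k l

lemma bmulAA (n m k l : ℕ) :
    bmul (Aelt n m) (Aelt k l)
      = ((n:ℂ) * l) • mono true true (n-1+k) (m+(l-1))
        + (-((m:ℂ) * k)) • mono true true (n+(k-1)) ((m-1)+l) := by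
  rw [Adec n m, Adec k l]
  simp only [bmul_add_left, bmul_add_right, bmul_smul_left, bmul_smul_right,
    bmul_ft_ft, bmul_ft_tf, bmul_tf_ft, bmul_tf_tf, smul_zero, zero_add, add_zero,
    smul_smul]
  module

lemma final_AA (n m k l : ℕ) :
    ((n:ℂ) * l) • Aelt (n-1+k) (m+(l-1)) + (-((m:ℂ) * k)) • Aelt (n+(k-1)) ((m-1)+l)
      = (((l : ℤ) * (n : ℤ) - (m : ℤ) * (k : ℤ) : ℤ) : ℂ) • Aelt (n+k-1) (m+l-1) := by
  funext a b p q
  cases a <;> cases b <;>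
    simp only [Aelt, Pi.add_apply, Pi.smul_apply, smul_eq_mul, Bool.false_eq_true,
      Bool.true_eq_false, false_and, and_false, true_and, and_true, reduceIte,
      add_zero, zero_add, mul_zero, if_true, if_false]
  · rw [iteval1 (p+1 = n-1+k ∧ q = m+(l-1)) p (n-1+k) (fun h => h.1),
      iteval1 (p+1 = n+(k-1) ∧ q = (m-1)+l) p (n+(k-1)) (fun h => h.1),
      iteval1 (p+1 = n+k-1 ∧ q = m+l-1) p (n+k-1) (fun h => h.1)]
    split_ifs <;>
      first
        | (push_cast; ring1)
        | (exfalso; omega)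
        | ((rcases (by omega : n = 0 ∨ l = 0) with rfl | rfl) <;> push_cast <;> ring1)
        | ((rcases (by omega : m = 0 ∨ k = 0) with rfl | rfl) <;> push_cast <;> ring1)
        | ((rcases (by omega : n = 0 ∨ l = 0) with rfl | rfl) <;>
            (rcases (by omega : m = 0 ∨ k = 0) with rfl | rfl) <;> push_cast <;> ring1)
  · rw [iteval2 (p = n-1+k ∧ q+1 = m+(l-1)) q (m+(l-1)) (fun h => h.2),
      iteval2 (p = n+(k-1) ∧ q+1 = (m-1)+l) q ((m-1)+l) (fun h => h.2),
      iteval2 (p = n+k-1 ∧ q+1 = m+l-1) q (m+l-1) (fun h => h.2)]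
    split_ifs <;>
      first
        | (push_cast; ring1)
        | (exfalso; omega)
        | ((rcases (by omega : n = 0 ∨ l = 0) with rfl | rfl) <;> push_cast <;> ring1)
        | ((rcases (by omega : m = 0 ∨ k = 0) with rfl | rfl) <;> push_cast <;> ring1)
        | ((rcases (by omega : n = 0 ∨ l = 0) with rfl | rfl) <;>
            (rcases (by omega : m = 0 ∨ k = 0) with rfl | rfl) <;> push_cast <;> ring1)

lemma schoutenAA (n m k l : ℕ) :
    schouten 1 (Aelt n m) (Aelt k l)
      = (((l : ℤ) * (n : ℤ) - (m : ℤ) * (k : ℤ) : ℤ) : ℂ) • Aelt (n + k - 1) (m + l - 1) := by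
  unfold schouten
  rw [oddLapA n m, oddLapA k l, bmul_zero_left, bmul_zero_right, smul_zero,
    sub_zero, sub_zero]
  rw [bmulAA, oddLap_add, oddLap_smul, oddLap_smul, oddLap_mono_tt, oddLap_mono_tt]
  exact final_AA n m k l

/-- In the Berezin algebra `B₂` with odd Laplacian `Δ`, the elements
`A_{nm} = n θ̄ y^{n-1} ȳ^m - m θ y^n ȳ^{m-1}`, `B_{nm} = y^n ȳ^m` and `C = θθ̄`
are Δ-closed, and they satisfy the Schouten bracket relations
`(A_{nm}, B_{kl}) = (ln - mk) B_{n+k-1, m+l-1}` and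
`(A_{nm}, A_{kl}) = (ln - mk) A_{n+k-1, m+l-1}` (the `A`'s being odd). -/
theorem berezin_delta_cocycles_and_schouten_relations :
    (∀ n m : ℕ, oddLap (Aelt n m) = 0)
      ∧ (∀ n m : ℕ, oddLap (Belt n m) = 0)
      ∧ oddLap Celt = 0
      ∧ (∀ n m k l : ℕ,
          schouten 1 (Aelt n m) (Belt k l)
            = (((l : ℤ) * (n : ℤ) - (m : ℤ) * (k : ℤ) : ℤ) : ℂ) •
                Belt (n + k - 1) (m + l - 1))
      ∧ (∀ n m k l : ℕ,
          schouten 1 (Aelt n m) (Aelt k l)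
            = (((l : ℤ) * (n : ℤ) - (m : ℤ) * (k : ℤ) : ℤ) : ℂ) •
                Aelt (n + k - 1) (m + l - 1)) := by
  refine ⟨oddLapA, fun n m => oddLap_mono_ff n m, ?_, schoutenAB, schoutenAA⟩
  have hC : Celt = mono true true 0 0 := by
    funext a b p q; simp [Celt, mono]
  rw [hC, oddLap_mono_tt]
  funext a b p q
  simp [Aelt]
end
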